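/- arXiv:2402.01742 — 2 statements merged into one kernel-verified Lean document; each statement's English description precedes it below -/
import Mathlib

section
/- Let n be a natural number, w, v, z : Fin n → ℝ with w j ≥ 0, v j ≥ 0, z j ≥ 0 for all j, B ≥ 0, and V ∈ ℝ. Consider the two-model Budget-Opt instance in which assigning section j to model 1 costs w j and yields quality z j + v j, while assigning it to model 2 costs 0 and yields quality z j. Then there exists an assignment x : Fin n → Fin 2 with total cost at most B and total quality at least V + ∑_j z j if and only if there exists a subset T ⊆ Fin n with ∑_{j ∈ T} w j ≤ B and ∑_{j ∈ T} v j ≥ V. -/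
/-- Core of the Knapsack reduction: in the two-model Budget-Opt instance (model 1 = index `0`
with cost `w j` and quality `z j + v j`; model 2 = index `1` with cost `0` and quality `z j`),
there is an assignment of total cost at most `B` and total quality at least `V + ∑ j, z j`
iff there is a subset `T` with `∑ j ∈ T, w j ≤ B` and `∑ j ∈ T, v j ≥ V`. -/
theorem stmt_4 (n : ℕ) (w v z : Fin n → ℝ) (hw : ∀ j, 0 ≤ w j) (hv : ∀ j, 0 ≤ v j)
    (hz : ∀ j, 0 ≤ z j) (B : ℝ) (hB : 0 ≤ B) (V : ℝ) :
    (∃ x : Fin n → Fin 2,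
        (∑ j, (if x j = 0 then w j else 0)) ≤ B ∧
        V + (∑ j, z j) ≤ ∑ j, (if x j = 0 then z j + v j else z j)) ↔
    (∃ T : Finset (Fin n), (∑ j ∈ T, w j) ≤ B ∧ V ≤ ∑ j ∈ T, v j) := by
  constructor
  · rintro ⟨x, hc, hq⟩
    refine ⟨Finset.univ.filter (fun j => x j = 0), ?_, ?_⟩
    · rw [Finset.sum_filter]; exact hc
    · have h : (∑ j, (if x j = 0 then z j + v j else z j))
          = (∑ j, z j) + ∑ j ∈ Finset.univ.filter (fun j => x j = 0), v j := by
        rw [Finset.sum_filter, ← Finset.sum_add_distrib]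
        apply Finset.sum_congr rfl
        intro j _
        by_cases h : x j = 0 <;> simp [h]
      rw [h] at hq
      linarith
  · rintro ⟨T, hc, hq⟩
    refine ⟨fun j => if j ∈ T then 0 else 1, ?_, ?_⟩
    · have h : (∑ j, (if (if j ∈ T then (0 : Fin 2) else 1) = 0 then w j else 0))
          = ∑ j ∈ T, w j := by
        rw [← Finset.sum_filter]
        apply Finset.sum_congr
        · ext j; by_cases h : j ∈ T <;> simp [h]
        · intros; rfl
      rw [h]; exact hc
    · have h : (∑ j, (if (if j ∈ T then (0 : Fin 2) else 1) = 0 then z j + v j else z j))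
          = (∑ j, z j) + ∑ j ∈ T, v j := by
        have hT : (∑ j ∈ T, v j) = ∑ j, if j ∈ T then v j else 0 := by
          rw [← Finset.sum_filter]
          congr 1
          ext j; simp
        rw [hT, ← Finset.sum_add_distrib]
        apply Finset.sum_congr rfl
        intro j _
        by_cases h : j ∈ T <;> simp [h]
      rw [h]
      linarith
end

section
/- Let n be a natural number, a : Fin n → ℝ with a j > 0 for all j, B ∈ ℝ with ∑_j a j = 2·B, and ℓ > 0. Then there exists an assignment x : Fin n → Fin 2 such that for each model i ∈ Fin 2 the total latency ∑_{j : x j = i} ℓ · a j is at most ℓ · B, if and only if there exists a subset T ⊆ Fin n with ∑_{j ∈ T} a j = B. -/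
/-- Core of the Partition reduction: with section sizes `a j > 0` summing to `2 * B` and
latency coefficient `ℓ > 0` on both models, there is an assignment `x : Fin n → Fin 2` whose
total latency on each model is at most `ℓ * B` iff there is a subset `T` with
`∑ j ∈ T, a j = B`. -/
theorem stmt_6 (n : ℕ) (a : Fin n → ℝ) (ha : ∀ j, 0 < a j) (B : ℝ)
    (hsum : (∑ j, a j) = 2 * B) (ℓ : ℝ) (hℓ : 0 < ℓ) :
    (∃ x : Fin n → Fin 2, ∀ i : Fin 2,
        (∑ j ∈ Finset.univ.filter (fun j => x j = i), ℓ * a j) ≤ ℓ * B) ↔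
    (∃ T : Finset (Fin n), ∑ j ∈ T, a j = B) := by
  constructor
  · rintro ⟨x, hx⟩
    refine ⟨Finset.univ.filter (fun j => x j = 0), ?_⟩
    have h0 := hx 0
    have h1 := hx 1
    rw [← Finset.mul_sum] at h0 h1
    have h0' : (∑ j ∈ Finset.univ.filter (fun j => x j = 0), a j) ≤ B :=
      le_of_mul_le_mul_left h0 hℓ
    have h1' : (∑ j ∈ Finset.univ.filter (fun j => x j = 1), a j) ≤ B :=
      le_of_mul_le_mul_left h1 hℓ
    have hcompl : Finset.univ.filter (fun j => x j = 1)
        = (Finset.univ.filter (fun j => x j = 0))ᶜ := by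
      ext j
      simp only [Finset.mem_filter, Finset.mem_compl, Finset.mem_univ, true_and]
      constructor
      · intro h h0; rw [h0] at h; exact absurd h (by decide)
      · intro h; omega
    have hsplit : (∑ j ∈ Finset.univ.filter (fun j => x j = 0), a j)
        + (∑ j ∈ Finset.univ.filter (fun j => x j = 1), a j) = 2 * B := by
      rw [hcompl, Finset.sum_add_sum_compl, hsum]
    linarith
  · rintro ⟨T, hT⟩
    refine ⟨fun j => if j ∈ T then 0 else 1, ?_⟩
    intro i
    fin_cases i
    · have : Finset.univ.filter (fun j => (if j ∈ T then (0:Fin 2) else 1) = 0) = T := by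
        ext j; simp only [Finset.mem_filter, Finset.mem_univ, true_and]
        split <;> simp_all
      simp only [show ((⟨0, by norm_num⟩:Fin 2)) = 0 from rfl]
      rw [this, ← Finset.mul_sum, hT]
    · have : Finset.univ.filter (fun j => (if j ∈ T then (0:Fin 2) else 1) = 1) = Tᶜ := by
        ext j; simp only [Finset.mem_filter, Finset.mem_compl, Finset.mem_univ, true_and]
        split <;> simp_all
      have hTc : ∑ j ∈ Tᶜ, a j = B := by
        have := Finset.sum_add_sum_compl T a
        rw [hT, hsum] at this; linarith
      simp only [show ((⟨1, by norm_num⟩:Fin 2)) = 1 from rfl]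
      rw [this, ← Finset.mul_sum, hTc]
end
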